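/- Stein simplification: let (X₁, X₂) be jointly Gaussian with Cov(X₁, X₂) = ν₁₂ and X₁ ~ N(μ₁, ν₁₁). If σ : ℝ → ℝ is differentiable with polynomial growth, then Cov(σ(X₁), X₂) = ν₁₂ · E[σ'(X₁)]. -/

import Mathlib

/-!
Write `X₁ = μ₁ + a Z₁` and `X₂ = μ₂ + b Z₁ + c Z₂` with `Z₁, Z₂` independent standard Gaussians.
By independence and `E Z₂ = 0` the `Z₂`-term does not contribute, so the covariance is
`b E[σ(μ₁ + a Z₁) Z₁]`. Stein's identity `E[f(Z) Z] = E[f'(Z)]`, i.e. Gaussian integration by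
parts, where polynomial growth of `f` and `f'` makes everything integrable against the density,
turns this into `a b E[σ'(X₁)]`.
-/

open MeasureTheory ProbabilityTheory Real
open scoped NNReal

noncomputable def npdf (x : ℝ) : ℝ := (Real.sqrt (2 * Real.pi))⁻¹ * Real.exp (-(x ^ 2) / 2)

noncomputable def ncdf (x : ℝ) : ℝ := ∫ t in Set.Iic x, npdf t

noncomputable def P2 : Measure (ℝ × ℝ) :=
  (ProbabilityTheory.gaussianReal 0 1).prod (ProbabilityTheory.gaussianReal 0 1)

open scoped ENNReal

def HasPolynomialGrowth (g : ℝ → ℝ) : Prop := ∃ (C : ℝ) (k : ℕ), ∀ x, |g x| ≤ C * (1 + |x|) ^ k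

lemma hasPolynomialGrowth_const (c : ℝ) : HasPolynomialGrowth fun _ => c :=
  ⟨|c|, 0, fun _ => by simp⟩

lemma hasPolynomialGrowth_id : HasPolynomialGrowth fun x => x := ⟨1, 1, fun _ => by simp⟩

lemma hasPolynomialGrowth_sub_const (m : ℝ) : HasPolynomialGrowth fun x => x - m := by
  refine ⟨1 + |m|, 1, fun x => ?_⟩
  nlinarith [abs_sub x m, abs_nonneg x, abs_nonneg m]

namespace HasPolynomialGrowth

variable {f g : ℝ → ℝ}

lemma mul (hf : HasPolynomialGrowth f) (hg : HasPolynomialGrowth g) :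
    HasPolynomialGrowth fun x => f x * g x := by
  obtain ⟨C₁, k₁, hf⟩ := hf
  obtain ⟨C₂, k₂, hg⟩ := hg
  refine ⟨C₁ * C₂, k₁ + k₂, fun x => ?_⟩
  calc |f x * g x| = |f x| * |g x| := abs_mul _ _
    _ ≤ (C₁ * (1 + |x|) ^ k₁) * (C₂ * (1 + |x|) ^ k₂) :=
        mul_le_mul (hf x) (hg x) (abs_nonneg _) ((abs_nonneg _).trans (hf x))
    _ = C₁ * C₂ * (1 + |x|) ^ (k₁ + k₂) := by ring

lemma comp_affine (hg : HasPolynomialGrowth g) (p q : ℝ) :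
    HasPolynomialGrowth fun x => g (p + q * x) := by
  obtain ⟨C, k, hg⟩ := hg
  have hC : 0 ≤ C := by simpa using (abs_nonneg (g 0)).trans (hg 0)
  refine ⟨C * (1 + |p| + |q|) ^ k, k, fun x => ?_⟩
  have hlin : 1 + |p + q * x| ≤ (1 + |p| + |q|) * (1 + |x|) := by
    nlinarith [abs_add_le p (q * x), abs_mul q x, abs_nonneg p, abs_nonneg q, abs_nonneg x]
  calc |g (p + q * x)| ≤ C * (1 + |p + q * x|) ^ k := hg _
    _ ≤ C * ((1 + |p| + |q|) * (1 + |x|)) ^ k := by gcongr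
    _ = C * (1 + |p| + |q|) ^ k * (1 + |x|) ^ k := by rw [mul_pow, mul_assoc]

lemma integrable_gaussianReal (hg : HasPolynomialGrowth g) {m : ℝ} {v : ℝ≥0}
    (hm : AEStronglyMeasurable g (gaussianReal m v)) : Integrable g (gaussianReal m v) := by
  obtain ⟨C, k, hg⟩ := hg
  have hid : MemLp (id : ℝ → ℝ) k (gaussianReal m v) :=
    memLp_id_gaussianReal' (k : ℝ≥0∞) (ENNReal.natCast_ne_top k)
  have hLp : MemLp (fun x : ℝ => (1 : ℝ) + ‖id x‖) k (gaussianReal m v) :=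
    (memLp_const (1 : ℝ)).add hid.norm
  have habs : ∀ x : ℝ, |(1 + |x|)| = 1 + |x| := fun x => abs_of_nonneg (by positivity)
  have hmoment : Integrable (fun x => (1 + |x|) ^ k) (gaussianReal m v) := by
    simpa [habs] using hLp.integrable_norm_pow'
  exact (hmoment.const_mul C).mono' hm (ae_of_all _ hg)

end HasPolynomialGrowth

lemma integrable_gaussianReal_iff {m : ℝ} {v : ℝ≥0} (hv : v ≠ 0) {g : ℝ → ℝ} :
    Integrable g (gaussianReal m v) ↔ Integrable fun x => gaussianPDFReal m v x * g x := by
  rw [gaussianReal_of_var_ne_zero m hv, integrable_withDensity_iff_integrable_smul'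
    (measurable_gaussianPDF m v) (ae_of_all _ fun _ => gaussianPDF_lt_top)]
  simp only [toReal_gaussianPDF, smul_eq_mul]

lemma hasDerivAt_gaussianPDFReal (m : ℝ) {v : ℝ≥0} (hv : v ≠ 0) (x : ℝ) :
    HasDerivAt (gaussianPDFReal m v) (-((x - m) / v) * gaussianPDFReal m v x) x := by
  have hv' : (v : ℝ) ≠ 0 := by exact_mod_cast hv
  have hexponent : HasDerivAt (fun y => -(y - m) ^ 2 / (2 * v)) (-((x - m) / v)) x :=
    ((hasDerivAt_pow 2 (x - m)).comp_sub_const x m).fun_neg.div_const (2 * (v : ℝ))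
      |>.congr_deriv (by field_simp; ring)
  exact (hexponent.exp.const_mul (√(2 * π * v))⁻¹).congr_deriv (by rw [gaussianPDFReal]; ring)

/-- Stein's lemma: integrate by parts against `(x - m) φ = (-v φ)'`, `φ` the Gaussian density. -/
theorem integral_mul_sub_gaussianReal {m : ℝ} {v : ℝ≥0} (hv : v ≠ 0) {f : ℝ → ℝ}
    (hf : Differentiable ℝ f) (hf_growth : HasPolynomialGrowth f)
    (hf'_growth : HasPolynomialGrowth (deriv f)) :
    ∫ x, f x * (x - m) ∂gaussianReal m v = v * ∫ x, deriv f x ∂gaussianReal m v := by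
  set φ := gaussianPDFReal m v
  have hv' : (v : ℝ) ≠ 0 := by exact_mod_cast hv
  have hφ (x : ℝ) : HasDerivAt (fun y => -(v : ℝ) * φ y) ((x - m) * φ x) x :=
    ((hasDerivAt_gaussianPDFReal m hv x).const_mul _).congr_deriv (by field_simp; rfl)
  have hint {g : ℝ → ℝ} (hg : HasPolynomialGrowth g)
      (hgm : AEStronglyMeasurable g (gaussianReal m v)) :
      Integrable fun x => φ x * g x :=
    (integrable_gaussianReal_iff hv).1 (hg.integrable_gaussianReal hgm)
  have hfm := hf.continuous.aestronglyMeasurable (μ := gaussianReal m v)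
  have hfx : Integrable (f * fun x => (x - m) * φ x) := by
    refine (hint (hf_growth.mul (hasPolynomialGrowth_sub_const m))
      (hfm.mul (by fun_prop))).congr (ae_of_all _ fun x => ?_)
    simp only [Pi.mul_apply]; ring
  have hf'φ : Integrable (deriv f * fun x => -(v : ℝ) * φ x) := by
    refine ((hint hf'_growth (measurable_deriv f).aestronglyMeasurable).const_mul
      (-(v : ℝ))).congr (ae_of_all _ fun x => ?_)
    simp only [Pi.mul_apply]; ring
  have hfφ : Integrable (f * fun x => -(v : ℝ) * φ x) := by
    refine ((hint hf_growth hfm).const_mul (-(v : ℝ))).congr (ae_of_all _ fun x => ?_)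
    simp only [Pi.mul_apply]; ring
  have hparts := integral_mul_deriv_eq_deriv_mul_of_integrable
    (fun x _ => (hf x).hasDerivAt) (fun x _ => hφ x) hfx hf'φ hfφ
  simp only [integral_gaussianReal_eq_integral_smul hv, smul_eq_mul]
  calc ∫ x, φ x * (f x * (x - m)) = ∫ x, f x * ((x - m) * φ x) := by congr 1; ext x; ring
    _ = -∫ x, deriv f x * (-(v : ℝ) * φ x) := hparts
    _ = v * ∫ x, φ x * deriv f x := by
        rw [← integral_neg, ← integral_const_mul]; congr 1; ext x; ring

theorem integral_comp_affine_mul_gaussianReal {σ : ℝ → ℝ} (hσ : Differentiable ℝ σ)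
    (hσ_growth : HasPolynomialGrowth σ) (hσ'_growth : HasPolynomialGrowth (deriv σ)) (p q : ℝ) :
    ∫ x, σ (p + q * x) * x ∂gaussianReal 0 1
      = q * ∫ x, deriv σ (p + q * x) ∂gaussianReal 0 1 := by
  have hderiv (x : ℝ) : HasDerivAt (fun y => σ (p + q * y)) (deriv σ (p + q * x) * q) x :=
    (hσ _).hasDerivAt.comp x
      (((hasDerivAt_id x).const_mul q).const_add p |>.congr_deriv (mul_one q))
  have hderiv_eq : deriv (fun y => σ (p + q * y)) = fun x => deriv σ (p + q * x) * q :=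
    funext fun x => (hderiv x).deriv
  have hstein := integral_mul_sub_gaussianReal one_ne_zero (m := 0)
    (fun x => (hderiv x).differentiableAt) (hσ_growth.comp_affine p q)
    (hderiv_eq ▸ (hσ'_growth.comp_affine p q).mul (hasPolynomialGrowth_const q))
  simp only [sub_zero, NNReal.coe_one, one_mul, hderiv_eq, integral_mul_const] at hstein
  rw [hstein, mul_comm]

theorem integral_comp_fst_mul_affine {μ ν : Measure ℝ} [SFinite μ] [IsProbabilityMeasure ν]
    {g : ℝ → ℝ} (hg : Integrable g μ) (hgx : Integrable (fun x => g x * x) μ)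
    (hν : Integrable (fun y => y) ν) (p q r : ℝ) :
    ∫ w, g w.1 * (p + q * w.1 + r * w.2) ∂μ.prod ν
      = p * ∫ x, g x ∂μ + q * ∫ x, g x * x ∂μ + r * ((∫ x, g x ∂μ) * ∫ y, y ∂ν) := by
  have hsplit : (fun w : ℝ × ℝ => g w.1 * (p + q * w.1 + r * w.2))
      = fun w => (p * g w.1 + q * (g w.1 * w.1)) + r * (g w.1 * w.2) := by
    ext w; ring
  rw [hsplit, integral_add (((hg.comp_fst ν).const_mul p).fun_add ((hgx.comp_fst ν).const_mul q))
      ((hg.mul_prod hν).const_mul r), integral_add ((hg.comp_fst ν).const_mul p)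
      ((hgx.comp_fst ν).const_mul q), integral_const_mul, integral_const_mul, integral_const_mul,
    integral_fun_fst, integral_fun_fst (fun x => g x * x), integral_prod_mul g (fun y => y)]
  simp only [probReal_univ, smul_eq_mul, one_mul]

theorem stein_cov_simplification_general (μ₁ μ₂ ν₁₂ a b c : ℝ) (h12 : ν₁₂ = a * b)
    (σ : ℝ → ℝ) (hσ : Differentiable ℝ σ)
    (hσgrowth : ∃ (C : ℝ) (k : ℕ), ∀ x, |σ x| ≤ C * (1 + |x|) ^ k)
    (hσ'growth : ∃ (C : ℝ) (k : ℕ), ∀ x, |deriv σ x| ≤ C * (1 + |x|) ^ k) :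
    (∫ w : ℝ × ℝ, σ (μ₁ + a * w.1) * (μ₂ + b * w.1 + c * w.2) ∂P2)
        - (∫ w : ℝ × ℝ, σ (μ₁ + a * w.1) ∂P2) * μ₂
      = ν₁₂ * ∫ w : ℝ × ℝ, deriv σ (μ₁ + a * w.1) ∂P2 := by
  have hf : HasPolynomialGrowth fun x => σ (μ₁ + a * x) :=
    HasPolynomialGrowth.comp_affine hσgrowth μ₁ a
  have hfm : AEStronglyMeasurable (fun x => σ (μ₁ + a * x)) (gaussianReal 0 1) :=
    (hσ.continuous.comp (by fun_prop)).aestronglyMeasurable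
  rw [P2, integral_comp_fst_mul_affine (hf.integrable_gaussianReal hfm)
      ((hf.mul hasPolynomialGrowth_id).integrable_gaussianReal (hfm.mul (by fun_prop)))
      (hasPolynomialGrowth_id.integrable_gaussianReal (by fun_prop)),
    integral_comp_affine_mul_gaussianReal hσ hσgrowth hσ'growth,
    integral_fun_fst (fun x => σ (μ₁ + a * x)), integral_fun_fst (fun x => deriv σ (μ₁ + a * x)),
    integral_id_gaussianReal, h12]
  simp only [mul_zero, add_zero, probReal_univ, smul_eq_mul, one_mul]
  ring

theorem stein_cov_simplification (μ₁ μ₂ ν₁₁ ν₂₂ ν₁₂ a b c : ℝ)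
    (h11 : ν₁₁ = a ^ 2) (h22 : ν₂₂ = b ^ 2 + c ^ 2) (h12 : ν₁₂ = a * b)
    (σ : ℝ → ℝ) (hσ : Differentiable ℝ σ)
    (hσgrowth : ∃ (C : ℝ) (k : ℕ), ∀ x, |σ x| ≤ C * (1 + |x|) ^ k)
    (hσ'growth : ∃ (C : ℝ) (k : ℕ), ∀ x, |deriv σ x| ≤ C * (1 + |x|) ^ k) :
    (∫ w : ℝ × ℝ, σ (μ₁ + a * w.1) * (μ₂ + b * w.1 + c * w.2) ∂P2)
        - (∫ w : ℝ × ℝ, σ (μ₁ + a * w.1) ∂P2) * μ₂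
      = ν₁₂ * ∫ w : ℝ × ℝ, deriv σ (μ₁ + a * w.1) ∂P2 :=
  stein_cov_simplification_general μ₁ μ₂ ν₁₂ a b c h12 σ hσ hσgrowth hσ'growth
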